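/- Let 1 ≤ p < 2, let l ≥ 1 and M = 2^l, let ν_1, …, ν_M ∈ ℝ^M be pairwise orthogonal vectors all of whose coordinates are ±1, and set ξ_i := ν_i / M^{1−1/p}. Let ε > 0 satisfy M < ε^{−2}. For a sign vector s ∈ {−1,+1}^M define f_s on the closed unit ball B of (ℝ^M, ‖·‖_p) by f_s(x) = max_{1≤i≤M} s_i·⟨ξ_i, x⟩. Then each f_s is convex and Lipschitz with constant 1 with respect to ‖·‖_p, inf_B f_s ≤ −M^{−1/2}, and every point x ∈ B with f_s(x) < inf_B f_s + ε satisfies s_i·⟨ξ_i, x⟩ < 0 for every i ∈ {1,…,M}. Consequently, for distinct sign vectors s ≠ t, the sets of ε-minima of f_s and f_t on B are disjoint. -/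

import Mathlib

/-- The set of ε-minima of `f` on `X`: points `x ∈ X` with `f x < f* + ε`,
where `f* = inf_{x ∈ X} f x`. -/
def epsMinima {E : Type*} (X : Set E) (f : E → ℝ) (ε : ℝ) : Set E :=
  {x ∈ X | f x < sInf (f '' X) + ε}

/-- The `L^p` norm on `ℝ^n` (for real `p`). -/
noncomputable def pNorm {n : ℕ} (p : ℝ) (x : Fin n → ℝ) : ℝ :=
  (∑ i, |x i| ^ p) ^ (1 / p)

/-- The closed unit ball of the `L^p` norm on `ℝ^n`. -/
noncomputable def pBall (n : ℕ) (p : ℝ) : Set (Fin n → ℝ) :=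
  {x | pNorm p x ≤ 1}




lemma pNorm_nonneg {n : ℕ} {p : ℝ} (z : Fin n → ℝ) : 0 ≤ pNorm p z :=
  Real.rpow_nonneg (Finset.sum_nonneg fun _ _ => Real.rpow_nonneg (abs_nonneg _) _) _

lemma rpow_smul_sum {n : ℕ} {p c : ℝ} (hp : 0 < p) (hc : 0 ≤ c) (u : Fin n → ℝ)
    (hu : ∀ k, 0 ≤ u k) :
    (∑ k, (c * u k) ^ p) ^ (1 / p) = c * (∑ k, u k ^ p) ^ (1 / p) := by
  rw [Finset.sum_congr rfl fun k _ => Real.mul_rpow hc (hu k), ← Finset.mul_sum,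
    Real.mul_rpow (Real.rpow_nonneg hc _)
      (Finset.sum_nonneg fun k _ => Real.rpow_nonneg (hu k) _),
    ← Real.rpow_mul hc, mul_one_div_cancel hp.ne', Real.rpow_one]

lemma sum_abs_le_pNorm {n : ℕ} {p : ℝ} (hp : 1 ≤ p) (z : Fin n → ℝ) :
    ∑ k, |z k| ≤ (n : ℝ) ^ (1 - 1 / p) * pNorm p z := by
  have h := Real.inner_le_weight_mul_Lp_of_nonneg (p := p) Finset.univ hp (fun _ => 1)
    (fun k => |z k|) (fun _ => zero_le_one) (fun k => abs_nonneg _)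
  simpa [pNorm, one_div] using h

lemma pNorm_le_two {n : ℕ} {p : ℝ} (hp1 : 1 ≤ p) (hp2 : p ≤ 2) (z : Fin n → ℝ) :
    pNorm p z ≤ (n : ℝ) ^ (1 / p - 1 / 2) * (∑ k, z k ^ 2) ^ ((1 : ℝ) / 2) := by
  have hp0 : 0 < p := lt_of_lt_of_le zero_lt_one hp1
  have hq : 1 ≤ 2 / p := by rw [le_div_iff₀ hp0]; linarith
  have h := Real.inner_le_weight_mul_Lp_of_nonneg (p := 2 / p) Finset.univ hq (fun _ => 1)
    (fun k => |z k| ^ p) (fun _ => zero_le_one)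
    (fun k => Real.rpow_nonneg (abs_nonneg _) _)
  simp only [one_mul, Finset.sum_const, Finset.card_univ, Fintype.card_fin, nsmul_eq_mul,
    mul_one] at h
  have hrw : ∀ k : Fin n, (|z k| ^ p) ^ (2 / p) = z k ^ 2 := by
    intro k
    rw [← Real.rpow_mul (abs_nonneg _), mul_div_cancel₀ 2 hp0.ne',
      show (2 : ℝ) = ((2 : ℕ) : ℝ) by norm_num, Real.rpow_natCast, sq_abs]
  rw [Finset.sum_congr rfl fun k _ => hrw k] at h
  have hinv : (2 / p)⁻¹ = p / 2 := by rw [inv_div]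
  rw [hinv] at h
  have hs2 : (0 : ℝ) ≤ ∑ k, z k ^ 2 := Finset.sum_nonneg fun k _ => sq_nonneg _
  have hn : (0 : ℝ) ≤ (n : ℝ) := Nat.cast_nonneg n
  calc pNorm p z = (∑ k, |z k| ^ p) ^ (1 / p) := rfl
    _ ≤ ((n : ℝ) ^ (1 - p / 2) * (∑ k, z k ^ 2) ^ (p / 2)) ^ (1 / p) :=
        Real.rpow_le_rpow (Finset.sum_nonneg fun _ _ => Real.rpow_nonneg (abs_nonneg _) _) h
          (by positivity)
    _ = (n : ℝ) ^ (1 / p - 1 / 2) * (∑ k, z k ^ 2) ^ ((1 : ℝ) / 2) := by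
        rw [Real.mul_rpow (Real.rpow_nonneg hn _) (Real.rpow_nonneg hs2 _),
          ← Real.rpow_mul hn, ← Real.rpow_mul hs2]
        have e1 : (1 - p / 2) * (1 / p) = 1 / p - 1 / 2 := by
          field_simp
        have e2 : p / 2 * (1 / p) = 1 / 2 := by
          field_simp
        rw [e1, e2]

lemma pNorm_sub_comm {n : ℕ} {p : ℝ} (x y : Fin n → ℝ) :
    pNorm p (x - y) = pNorm p (y - x) := by
  simp only [pNorm, Pi.sub_apply, abs_sub_comm]


/-- for `1 ≤ p < 2`, `M = 2^l`, pairwise orthogonal `±1`-vectors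
`ν_i`, `ξ_i = ν_i / M^{1-1/p}`, `ε > 0` with `M < ε^{-2}`, and
`f_s(x) = max_i s_i ⟨ξ_i, x⟩` on the unit `L^p`-ball `B`: each `f_s` is convex
and `1`-Lipschitz for `‖·‖_p`, `inf_B f_s ≤ -M^{-1/2}`, every ε-minimum `x`
satisfies `s_i ⟨ξ_i, x⟩ < 0` for all `i`; hence distinct sign vectors have
disjoint sets of ε-minima. -/
theorem lp_small_p_large_scale_packing (p : ℝ) (hp1 : 1 ≤ p) (hp2 : p < 2)
    (l : ℕ) (hl : 1 ≤ l) (M : ℕ) (hM : M = 2 ^ l)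
    (ν : Fin M → Fin M → ℝ)
    (hν1 : ∀ i k, ν i k = 1 ∨ ν i k = -1)
    (hν2 : ∀ i j, i ≠ j → ∑ k, ν i k * ν j k = 0)
    (ξ : Fin M → Fin M → ℝ)
    (hξ : ∀ i k, ξ i k = ν i k / (M : ℝ) ^ (1 - 1 / p))
    (ε : ℝ) (hε : 0 < ε) (hMε : (M : ℝ) < ε ^ (-2 : ℝ))
    (f : (Fin M → ℝ) → (Fin M → ℝ) → ℝ)
    (hf : ∀ S x, f S x = ⨆ i : Fin M, S i * ∑ k, ξ i k * x k) :
    (∀ S : Fin M → ℝ, (∀ i, S i = 1 ∨ S i = -1) →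
      ConvexOn ℝ (pBall M p) (f S) ∧
      (∀ x ∈ pBall M p, ∀ y ∈ pBall M p, |f S x - f S y| ≤ pNorm p (x - y)) ∧
      sInf (f S '' pBall M p) ≤ -((M : ℝ) ^ (-(1 / 2) : ℝ)) ∧
      (∀ x ∈ pBall M p, f S x < sInf (f S '' pBall M p) + ε →
        ∀ i : Fin M, S i * ∑ k, ξ i k * x k < 0)) ∧
    (∀ S T : Fin M → ℝ, (∀ i, S i = 1 ∨ S i = -1) → (∀ i, T i = 1 ∨ T i = -1) →
      S ≠ T →
      epsMinima (pBall M p) (f S) ε ∩ epsMinima (pBall M p) (f T) ε = ∅) := by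
  have hp0 : 0 < p := lt_of_lt_of_le zero_lt_one hp1
  have hMpos : 0 < M := by rw [hM]; positivity
  haveI : Nonempty (Fin M) := ⟨⟨0, hMpos⟩⟩
  have hm : (0 : ℝ) < (M : ℝ) := Nat.cast_pos.mpr hMpos
  have hD : (0 : ℝ) < (M : ℝ) ^ (1 - 1 / p) := Real.rpow_pos_of_pos hm _
  have hνabs : ∀ i k, |ν i k| = 1 := fun i k => by
    rcases hν1 i k with h | h <;> rw [h] <;> norm_num
  -- duality bound
  have hdual : ∀ (i : Fin M) (z : Fin M → ℝ), |∑ k, ξ i k * z k| ≤ pNorm p z := by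
    intro i z
    have h2 : ∀ k : Fin M, |ξ i k * z k| = ((M : ℝ) ^ (1 - 1 / p))⁻¹ * |z k| := by
      intro k
      rw [abs_mul, hξ, abs_div, hνabs, abs_of_pos hD, one_div]
    calc |∑ k, ξ i k * z k| ≤ ∑ k, |ξ i k * z k| := Finset.abs_sum_le_sum_abs _ _
      _ = ∑ k, ((M : ℝ) ^ (1 - 1 / p))⁻¹ * |z k| := Finset.sum_congr rfl fun k _ => h2 k
      _ = ((M : ℝ) ^ (1 - 1 / p))⁻¹ * ∑ k, |z k| := (Finset.mul_sum _ _ _).symm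
      _ ≤ ((M : ℝ) ^ (1 - 1 / p))⁻¹ * ((M : ℝ) ^ (1 - 1 / p) * pNorm p z) :=
          mul_le_mul_of_nonneg_left (sum_abs_le_pNorm hp1 z) (inv_nonneg.mpr hD.le)
      _ = pNorm p z := by rw [← mul_assoc, inv_mul_cancel₀ hD.ne', one_mul]
  -- orthogonality
  have horth : ∀ i j, ∑ k, ν i k * ν j k = if i = j then (M : ℝ) else 0 := by
    intro i j
    by_cases h : i = j
    · subst h
      rw [if_pos rfl]
      have h1 : ∀ k : Fin M, ν i k * ν i k = 1 := fun k => by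
        rcases hν1 i k with h | h <;> rw [h] <;> norm_num
      rw [Finset.sum_congr rfl fun k _ => h1 k, Finset.sum_const, Finset.card_univ,
        Fintype.card_fin, nsmul_eq_mul, mul_one]
    · rw [if_neg h]; exact hν2 i j h
  have hbdd : ∀ (S x : Fin M → ℝ),
      BddAbove (Set.range fun i : Fin M => S i * ∑ k, ξ i k * x k) :=
    fun S x => (Set.finite_range _).bddAbove
  -- epsilon bound
  have heps : ε < (M : ℝ) ^ (-(1 / 2) : ℝ) := by
    have h1 : ε ^ (-2 : ℝ) = (ε ^ 2)⁻¹ := by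
      rw [show (-2 : ℝ) = -(2 : ℝ) from rfl, Real.rpow_neg hε.le,
        show (2 : ℝ) = ((2 : ℕ) : ℝ) by norm_num, Real.rpow_natCast]
    rw [h1] at hMε
    have hε2 : (0 : ℝ) < ε ^ 2 := by positivity
    have h2 : ε ^ 2 < ((M : ℝ))⁻¹ := by
      have h4 : ε ^ 2 * (M : ℝ) < 1 := by
        have h5 := mul_lt_mul_of_pos_left hMε hε2
        rwa [mul_inv_cancel₀ hε2.ne'] at h5
      have h6 : (0 : ℝ) < ((M : ℝ))⁻¹ := inv_pos.mpr hm
      nlinarith [mul_pos hε2 hm, inv_mul_cancel₀ hm.ne']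
    have h3 : ((M : ℝ))⁻¹ = ((M : ℝ) ^ (-(1 / 2) : ℝ)) ^ 2 := by
      rw [← Real.rpow_natCast ((M : ℝ) ^ (-(1 / 2) : ℝ)) 2, ← Real.rpow_mul hm.le]
      norm_num
      rw [Real.rpow_neg_one]
    refine lt_of_pow_lt_pow_left₀ 2 (Real.rpow_nonneg hm.le _) ?_
    rw [← h3]; exact h2
  -- the per-sign bundle
  have key : ∀ S : Fin M → ℝ, (∀ i, S i = 1 ∨ S i = -1) →
      ConvexOn ℝ (pBall M p) (f S) ∧
      (∀ x ∈ pBall M p, ∀ y ∈ pBall M p, |f S x - f S y| ≤ pNorm p (x - y)) ∧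
      sInf (f S '' pBall M p) ≤ -((M : ℝ) ^ (-(1 / 2) : ℝ)) ∧
      (∀ x ∈ pBall M p, f S x < sInf (f S '' pBall M p) + ε →
        ∀ i : Fin M, S i * ∑ k, ξ i k * x k < 0) := by
    intro S hS
    have hSabs : ∀ i, |S i| = 1 := fun i => by rcases hS i with h | h <;> rw [h] <;> norm_num
    have hSsq : ∀ i, S i * S i = 1 := fun i => by rcases hS i with h | h <;> rw [h] <;> norm_num
    have hLle : ∀ (i : Fin M) (x : Fin M → ℝ), S i * ∑ k, ξ i k * x k ≤ pNorm p x := by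
      intro i x
      calc S i * ∑ k, ξ i k * x k ≤ |S i * ∑ k, ξ i k * x k| := le_abs_self _
        _ = |∑ k, ξ i k * x k| := by rw [abs_mul, hSabs, one_mul]
        _ ≤ pNorm p x := hdual i x
    have hLge : ∀ (i : Fin M) (x : Fin M → ℝ), -pNorm p x ≤ S i * ∑ k, ξ i k * x k := by
      intro i x
      have h1 : |S i * ∑ k, ξ i k * x k| ≤ pNorm p x := by
        rw [abs_mul, hSabs, one_mul]; exact hdual i x
      have h2 := neg_abs_le (S i * ∑ k, ξ i k * x k)
      linarith
    have hlow : ∀ x ∈ pBall M p, -1 ≤ f S x := by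
      intro x hx
      have hx1 : pNorm p x ≤ 1 := hx
      rw [hf]
      refine le_trans ?_ (le_ciSup (hbdd S x) ⟨0, hMpos⟩)
      refine le_trans ?_ (hLge ⟨0, hMpos⟩ x)
      linarith
    have hBddB : BddBelow (f S '' pBall M p) :=
      ⟨-1, by rintro v ⟨x, hx, rfl⟩; exact hlow x hx⟩
    -- inner sums
    have hsum1 : ∀ i : Fin M, ∑ k, ν i k * (∑ j, S j * ν j k) = S i * M := by
      intro i
      have e1 : ∀ k : Fin M, ν i k * (∑ j, S j * ν j k) = ∑ j, S j * (ν i k * ν j k) := by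
        intro k; rw [Finset.mul_sum]; exact Finset.sum_congr rfl fun j _ => by ring
      rw [Finset.sum_congr rfl fun k _ => e1 k, Finset.sum_comm]
      have e2 : ∀ j : Fin M, ∑ k, S j * (ν i k * ν j k) = S j * (if i = j then (M : ℝ) else 0) := by
        intro j; rw [← Finset.mul_sum, horth]
      rw [Finset.sum_congr rfl fun j _ => e2 j]
      simp
    have hsumsq : ∑ k, (∑ j, S j * ν j k) ^ 2 = (M : ℝ) * M := by
      have e1 : ∀ k : Fin M,
          (∑ j, S j * ν j k) ^ 2 = ∑ j, S j * (ν j k * (∑ j', S j' * ν j' k)) := by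
        intro k; rw [sq, Finset.sum_mul]; exact Finset.sum_congr rfl fun j _ => by ring
      rw [Finset.sum_congr rfl fun k _ => e1 k, Finset.sum_comm]
      have e2 : ∀ j : Fin M,
          ∑ k, S j * (ν j k * (∑ j', S j' * ν j' k)) = S j * (S j * M) := by
        intro j; rw [← Finset.mul_sum, hsum1 j]
      rw [Finset.sum_congr rfl fun j _ => e2 j]
      have e3 : ∀ j : Fin M, S j * (S j * (M : ℝ)) = (M : ℝ) := fun j => by
        rw [← mul_assoc, hSsq j, one_mul]
      rw [Finset.sum_congr rfl fun j _ => e3 j, Finset.sum_const, Finset.card_univ,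
        Fintype.card_fin, nsmul_eq_mul]
    -- candidate minimizer
    set c : ℝ := (M : ℝ) ^ (-(1 / p) - 1 / 2 : ℝ) with hc
    have hcpos : 0 < c := Real.rpow_pos_of_pos hm _
    set y : Fin M → ℝ := fun k => -(c * ∑ j, S j * ν j k) with hy
    have hysq : ∑ k, y k ^ 2 = c ^ 2 * ((M : ℝ) * M) := by
      have : ∀ k : Fin M, y k ^ 2 = c ^ 2 * (∑ j, S j * ν j k) ^ 2 := by
        intro k; rw [hy]; ring
      rw [Finset.sum_congr rfl fun k _ => this k, ← Finset.mul_sum, hsumsq]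
    have hyB : y ∈ pBall M p := by
      show pNorm p y ≤ 1
      have h1 := pNorm_le_two hp1 hp2.le y
      rw [hysq] at h1
      have h2 : (c ^ 2 * ((M : ℝ) * M)) ^ ((1 : ℝ) / 2) = c * M := by
        rw [show c ^ 2 * ((M : ℝ) * M) = (c * M) ^ 2 by ring,
          ← Real.rpow_natCast (c * (M : ℝ)) 2, ← Real.rpow_mul (by positivity)]
        norm_num
      rw [h2] at h1
      refine h1.trans (le_of_eq ?_)
      have hmm : (M : ℝ) ^ (1 / p - 1 / 2 : ℝ) * (c * M)
          = (M : ℝ) ^ (1 / p - 1 / 2 : ℝ) * ((M : ℝ) ^ (-(1 / p) - 1 / 2 : ℝ) * (M : ℝ) ^ (1 : ℝ)) := by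
        rw [hc, Real.rpow_one]
      rw [hmm, ← Real.rpow_add hm, ← Real.rpow_add hm,
        show (1 / p - 1 / 2 : ℝ) + (-(1 / p) - 1 / 2 + 1) = 0 by ring, Real.rpow_zero]
    -- value at the minimizer
    have hval : ∀ i : Fin M, S i * ∑ k, ξ i k * y k = -((M : ℝ) ^ (-(1 / 2) : ℝ)) := by
      intro i
      have h1 : ∑ k, ξ i k * y k = -c / (M : ℝ) ^ (1 - 1 / p) * (S i * M) := by
        have e1 : ∀ k : Fin M, ξ i k * y k
            = -c / (M : ℝ) ^ (1 - 1 / p) * (ν i k * (∑ j, S j * ν j k)) := by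
          intro k; rw [hξ, hy]; ring
        rw [Finset.sum_congr rfl fun k _ => e1 k, ← Finset.mul_sum, hsum1 i]
      rw [h1]
      have h2 : S i * (-c / (M : ℝ) ^ (1 - 1 / p) * (S i * (M : ℝ)))
          = S i * S i * (-(c * M / (M : ℝ) ^ (1 - 1 / p))) := by ring
      rw [h2, hSsq i, one_mul, neg_inj.symm]
      congr 1
      have h3 : c * (M : ℝ) / (M : ℝ) ^ (1 - 1 / p)
          = (M : ℝ) ^ (-(1 / p) - 1 / 2 : ℝ) * (M : ℝ) ^ (1 : ℝ) * (M : ℝ) ^ (-(1 - 1 / p) : ℝ) := by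
        rw [hc, div_eq_mul_inv, Real.rpow_one, Real.rpow_neg hm.le]
      rw [h3, ← Real.rpow_add hm, ← Real.rpow_add hm]
      congr 1
      ring
    have hfy : f S y = -((M : ℝ) ^ (-(1 / 2) : ℝ)) := by
      rw [hf]
      simp only [hval]
      exact ciSup_const
    have hinf : sInf (f S '' pBall M p) ≤ -((M : ℝ) ^ (-(1 / 2) : ℝ)) := by
      rw [← hfy]; exact csInf_le hBddB ⟨y, hyB, rfl⟩
    -- convexity of the ball
    have hBconv : Convex ℝ (pBall M p) := by
      intro x hx y' hy' a b ha hb hab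
      show pNorm p (a • x + b • y') ≤ 1
      have hx1 : pNorm p x ≤ 1 := hx
      have hy1 : pNorm p y' ≤ 1 := hy'
      have habs : ∀ k : Fin M, |(a • x + b • y') k| ≤ a * |x k| + b * |y' k| := by
        intro k
        simp only [Pi.add_apply, Pi.smul_apply, smul_eq_mul]
        calc |a * x k + b * y' k| ≤ |a * x k| + |b * y' k| := abs_add_le _ _
          _ = a * |x k| + b * |y' k| := by
              rw [abs_mul, abs_mul, abs_of_nonneg ha, abs_of_nonneg hb]
      have h1 : pNorm p (a • x + b • y') ≤ (∑ k, (a * |x k| + b * |y' k|) ^ p) ^ (1 / p) := by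
        refine Real.rpow_le_rpow
          (Finset.sum_nonneg fun k _ => Real.rpow_nonneg (abs_nonneg _) _)
          (Finset.sum_le_sum fun k _ => Real.rpow_le_rpow (abs_nonneg _) (habs k) hp0.le)
          (by positivity)
      have h2 := Real.Lp_add_le_of_nonneg (s := Finset.univ)
        (f := fun k : Fin M => a * |x k|) (g := fun k : Fin M => b * |y' k|) hp1
        (fun k _ => by positivity) (fun k _ => by positivity)
      have h3 : (∑ k, (a * |x k|) ^ p) ^ (1 / p) = a * pNorm p x :=
        rpow_smul_sum hp0 ha _ fun k => abs_nonneg _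
      have h4 : (∑ k, (b * |y' k|) ^ p) ^ (1 / p) = b * pNorm p y' :=
        rpow_smul_sum hp0 hb _ fun k => abs_nonneg _
      have h5 : a * pNorm p x + b * pNorm p y' ≤ 1 := by
        have := mul_le_mul_of_nonneg_left hx1 ha
        have := mul_le_mul_of_nonneg_left hy1 hb
        linarith
      calc pNorm p (a • x + b • y') ≤ (∑ k, (a * |x k| + b * |y' k|) ^ p) ^ (1 / p) := h1
        _ ≤ (∑ k, (a * |x k|) ^ p) ^ (1 / p) + (∑ k, (b * |y' k|) ^ p) ^ (1 / p) := h2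
        _ = a * pNorm p x + b * pNorm p y' := by rw [h3, h4]
        _ ≤ 1 := h5
    have hconvF : ConvexOn ℝ (pBall M p) (f S) := by
      refine ⟨hBconv, ?_⟩
      intro x hx y' hy' a b ha hb hab
      simp only [smul_eq_mul, hf]
      apply ciSup_le
      intro i
      have hlin : S i * ∑ k, ξ i k * (a • x + b • y') k
          = a * (S i * ∑ k, ξ i k * x k) + b * (S i * ∑ k, ξ i k * y' k) := by
        simp only [Pi.add_apply, Pi.smul_apply, smul_eq_mul]
        rw [Finset.sum_congr rfl fun k (_ : k ∈ Finset.univ) =>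
            (show ξ i k * (a * x k + b * y' k) = a * (ξ i k * x k) + b * (ξ i k * y' k) by ring),
          Finset.sum_add_distrib, ← Finset.mul_sum, ← Finset.mul_sum]
        ring
      rw [hlin]
      exact add_le_add
        (mul_le_mul_of_nonneg_left (le_ciSup (hbdd S x) i) ha)
        (mul_le_mul_of_nonneg_left (le_ciSup (hbdd S y') i) hb)
    -- Lipschitz
    have main : ∀ x y' : Fin M → ℝ, f S x ≤ f S y' + pNorm p (x - y') := by
      intro x y'
      conv_lhs => rw [hf]
      apply ciSup_le
      intro i
      have h1 : S i * ∑ k, ξ i k * x k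
          = S i * ∑ k, ξ i k * y' k + S i * ∑ k, ξ i k * (x - y') k := by
        have e1 : ∀ k : Fin M, ξ i k * (x - y') k = ξ i k * x k - ξ i k * y' k := by
          intro k; simp only [Pi.sub_apply]; ring
        rw [Finset.sum_congr rfl fun k _ => e1 k, Finset.sum_sub_distrib]
        ring
      have h2 : S i * ∑ k, ξ i k * y' k ≤ f S y' := by
        rw [hf]; exact le_ciSup (hbdd S y') i
      have h3 := hLle i (x - y')
      linarith
    have hlip : ∀ x ∈ pBall M p, ∀ y' ∈ pBall M p, |f S x - f S y'| ≤ pNorm p (x - y') := by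
      intro x _ y' _
      rw [abs_sub_le_iff]
      constructor
      · linarith [main x y']
      · have h1 := main y' x
        rw [pNorm_sub_comm y' x] at h1
        linarith
    -- eps minima
    have hmin : ∀ x ∈ pBall M p, f S x < sInf (f S '' pBall M p) + ε →
        ∀ i : Fin M, S i * ∑ k, ξ i k * x k < 0 := by
      intro x hx hlt i
      have h0 : f S x < 0 := by linarith
      calc S i * ∑ k, ξ i k * x k ≤ f S x := by
            rw [hf]; exact le_ciSup (hbdd S x) i
        _ < 0 := h0
    exact ⟨hconvF, hlip, hinf, hmin⟩
  refine ⟨key, ?_⟩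
  intro S T hS hT hST
  ext x
  simp only [Set.mem_inter_iff, Set.mem_empty_iff_false, iff_false]
  rintro ⟨⟨hxB, hxS⟩, ⟨-, hxT⟩⟩
  have hex : ∃ i, S i ≠ T i := by
    by_contra h
    push_neg at h
    exact hST (funext h)
  obtain ⟨i, hi⟩ := hex
  have h1 := (key S hS).2.2.2 x hxB hxS i
  have h2 := (key T hT).2.2.2 x hxB hxT i
  have hTi : T i = -S i := by
    rcases hS i with h | h <;> rcases hT i with h' | h' <;> rw [h, h'] <;>
      first | (exfalso; rw [h, h'] at hi; exact hi rfl) | norm_num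
  rw [hTi] at h2
  nlinarith
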